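/- For s ≥ 0 let k(s) = ⌊√(s + 1/4) + 1/2⌋ and define N_N(s) = (k(s)² + k(s))/2 and N_D(s) = (k(s)² − k(s))/2. Define the averages A_N(t) = (1/t)∫₀ᵗ (N_N(s) − (s/2 + (1/2)√(s + 1/4) + 1/6)) ds and A_D(t) = (1/t)∫₀ᵗ (N_D(s) − (s/2 − (1/2)√(s + 1/4) + 1/6)) ds. Then with g(x) = 1/6 − 2(x − ⌊x + 1/2⌋)², there is a constant C such that |A_N(t) − (1/2)g(√(t + 1/4))| ≤ C t^{−1/2} and |A_D(t) − (1/2)g(√(t + 1/4))| ≤ C t^{−1/2} for all t ≥ 1. -/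

import Mathlib

/-!
Write `e = 1` (Neumann) or `e = -1` (Dirichlet). On `[k² - k, k² + k)` the index
`⌊√(s + 1/4) + 1/2⌋` equals `k`, so there the integrand is smooth with an explicit primitive
`P_k`; the constants of `P_k` are chosen so that `P_k` and `P_{k+1}` agree at the junction
`s = k² + k`, hence the integral over `[0, t]` telescopes to `P_k(t) - P_0(0)`.
With `x = √(t + 1/4)` and `v = x - k ∈ [-1/2, 1/2]`, the difference
`P_k(t) - P_0(0) - (t/2) g(x)` is `A(v) + x B(v)` for bounded polynomials `A, B`,
hence `O(x) = O(√t)`; dividing by `t` gives the bound.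
-/

open MeasureTheory Set

noncomputable section

def sphereIndex (s : ℝ) : ℤ := ⌊√(s + 1 / 4) + 1 / 2⌋

def pieceError (e K s : ℝ) : ℝ :=
  (K ^ 2 + e * K) / 2 - (s / 2 + e * √(s + 1 / 4) / 2 + 1 / 6)

def countingError (e s : ℝ) : ℝ := pieceError e (sphereIndex s) s

def piecePrimitive (e K s : ℝ) : ℝ :=
  e * K / 24 + K ^ 2 / 8 - e * K ^ 3 / 6 - K ^ 4 / 4
    + (s + 1 / 4) * (e * K / 2 + K ^ 2 / 2 - 1 / 24)
    - e / 3 * ((s + 1 / 4) * √(s + 1 / 4)) - (s + 1 / 4) ^ 2 / 4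

def roundingCorrection (x : ℝ) : ℝ := 1 / 6 - 2 * (x - ⌊x + 1 / 2⌋) ^ 2

end

lemma sphereIndex_eq_of_mem_Ico {k : ℤ} {s : ℝ}
    (hs : s ∈ Ico ((k : ℝ) ^ 2 - k) (k ^ 2 + k)) : sphereIndex s = k := by
  obtain ⟨h₁, h₂⟩ := hs
  have hk : (0 : ℝ) < k := by linarith
  rw [sphereIndex, Int.floor_eq_iff]
  constructor
  · have : (k : ℝ) - 1 / 2 ≤ √(s + 1 / 4) := Real.le_sqrt_of_sq_le (by nlinarith)
    linarith
  · have : √(s + 1 / 4) < k + 1 / 2 := (Real.sqrt_lt' (by linarith)).2 (by nlinarith)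
    linarith

lemma abs_sqrt_sub_sphereIndex_le (s : ℝ) :
    |√(s + 1 / 4) - sphereIndex s| ≤ 1 / 2 := by
  have h₁ := Int.floor_le (√(s + 1 / 4) + 1 / 2)
  have h₂ := Int.lt_floor_add_one (√(s + 1 / 4) + 1 / 2)
  rw [abs_le, sphereIndex]
  constructor <;> linarith

lemma hasDerivAt_piecePrimitive (e K : ℝ) {s : ℝ} (hs : -1 / 4 < s) :
    HasDerivAt (piecePrimitive e K) (pieceError e K s) s := by
  have hpos : 0 < s + 1 / 4 := by linarith
  have hlin : HasDerivAt (fun y : ℝ => y + 1 / 4) 1 s := (hasDerivAt_id s).add_const _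
  have hsqrt : HasDerivAt (fun y : ℝ => √(y + 1 / 4)) (1 / (2 * √(s + 1 / 4)) * 1) s :=
    (Real.hasDerivAt_sqrt hpos.ne').comp s hlin
  have H := (((hlin.mul_const (e * K / 2 + K ^ 2 / 2 - 1 / 24)).const_add
      (e * K / 24 + K ^ 2 / 8 - e * K ^ 3 / 6 - K ^ 4 / 4)).sub
      ((hlin.mul hsqrt).const_mul (e / 3))).sub ((hlin.pow 2).div_const 4)
  refine (H.congr_deriv ?_).congr_of_eventuallyEq (Filter.Eventually.of_forall fun y => ?_)
  · have hne : √(s + 1 / 4) ≠ 0 := (Real.sqrt_pos.2 hpos).ne'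
    have hhalf : (s + 1 / 4) * (1 / (2 * √(s + 1 / 4)) * 1) = √(s + 1 / 4) / 2 := by
      have hsq := Real.sq_sqrt hpos.le
      generalize √(s + 1 / 4) = r at hsq hne ⊢
      rw [← hsq]
      field_simp
    rw [hhalf, pieceError]
    ring
  · simp only [piecePrimitive, Pi.sub_apply, Pi.mul_apply, Pi.pow_apply]

lemma piecePrimitive_succ_eq (e : ℝ) {c : ℝ} (hc : -1 / 2 ≤ c) :
    piecePrimitive e (c + 1) (c ^ 2 + c) = piecePrimitive e c (c ^ 2 + c) := by
  have h : √(c ^ 2 + c + 1 / 4) = c + 1 / 2 := by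
    rw [show c ^ 2 + c + 1 / 4 = (c + 1 / 2) ^ 2 by ring, Real.sqrt_sq (by linarith)]
  simp only [piecePrimitive, h]
  ring

lemma integral_countingError_of_subset_Icc (e : ℝ) {k : ℤ} {a b : ℝ} (hab : a ≤ b)
    (hsub : Icc a b ⊆ Icc ((k : ℝ) ^ 2 - k) (k ^ 2 + k)) :
    IntervalIntegrable (countingError e) volume a b ∧
      ∫ s in a..b, countingError e s = piecePrimitive e k b - piecePrimitive e k a := by
  have ha : 0 ≤ a := by
    have hk : (k : ℝ) ≤ k ^ 2 := by exact_mod_cast Int.le_self_sq k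
    linarith [(hsub (left_mem_Icc.2 hab)).1]
  have hae : ∀ᵐ s : ℝ, s ∈ uIoc a b → countingError e s = pieceError e k s := by
    filter_upwards [Measure.ae_ne volume ((k : ℝ) ^ 2 + k)] with s hne hs
    rw [uIoc_of_le hab] at hs
    have hs' := hsub (Ioc_subset_Icc_self hs)
    rw [countingError, sphereIndex_eq_of_mem_Ico ⟨hs'.1, hs'.2.lt_of_ne hne⟩]
  have hcont : Continuous (pieceError e k) := by unfold pieceError; fun_prop
  refine ⟨(hcont.intervalIntegrable a b).congr_ae ?_, ?_⟩
  · rw [Filter.EventuallyEq, ae_restrict_iff' measurableSet_uIoc]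
    filter_upwards [hae] with s hs hmem using (hs hmem).symm
  · rw [intervalIntegral.integral_congr_ae hae]
    refine intervalIntegral.integral_eq_sub_of_hasDerivAt (fun s hs => ?_)
      (hcont.intervalIntegrable a b)
    rw [uIcc_of_le hab] at hs
    exact hasDerivAt_piecePrimitive e k (by linarith [hs.1])

lemma integral_countingError (e : ℝ) {k : ℤ} (hk : 0 ≤ k) {t : ℝ}
    (ht : t ∈ Icc ((k : ℝ) ^ 2 - k) (k ^ 2 + k)) :
    IntervalIntegrable (countingError e) volume 0 t ∧
      ∫ s in (0 : ℝ)..t, countingError e s = piecePrimitive e k t - piecePrimitive e 0 0 := by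
  induction k, hk using Int.leInduction generalizing t with
  | base =>
    obtain rfl : t = 0 := by simp only [Int.cast_zero] at ht; linarith [ht.1, ht.2]
    simp
  | succ k hk ih =>
    have hk' : (0 : ℝ) ≤ k := by exact_mod_cast hk
    push_cast at ht ⊢
    obtain ⟨hint, heq⟩ := ih (t := (k : ℝ) ^ 2 + k) ⟨by linarith, le_rfl⟩
    obtain ⟨hint', heq'⟩ := integral_countingError_of_subset_Icc e (k := k + 1)
      (a := (k : ℝ) ^ 2 + k) (b := t) (by linarith [ht.1]) (by
        push_cast
        exact Icc_subset_Icc (by linarith) ht.2)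
    push_cast at heq'
    refine ⟨hint.trans hint', ?_⟩
    rw [← intervalIntegral.integral_add_adjacent_intervals hint hint', heq, heq',
      piecePrimitive_succ_eq e (by linarith)]
    ring

lemma piecePrimitive_sub_eq (e K : ℝ) {x : ℝ} (hx : 0 ≤ x) :
    piecePrimitive e K (x ^ 2 - 1 / 4) - piecePrimitive e 0 0
        - (x ^ 2 - 1 / 4) / 2 * (1 / 6 - 2 * (x - K) ^ 2) =
      (3 / 64 - (x - K) ^ 2 / 8 - (x - K) ^ 4 / 4)
        + e * (1 / 24 - (x - K) / 24 + (x - K) ^ 3 / 6)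
        + x * ((-(x - K) / 4 + (x - K) ^ 3) + e * (1 / 24 - (x - K) ^ 2 / 2)) := by
  have hroot : √(x ^ 2 - 1 / 4 + 1 / 4) = x := by rw [sub_add_cancel, Real.sqrt_sq hx]
  have hquarter : √((0 : ℝ) + 1 / 4) = 1 / 2 := by
    rw [zero_add, show (1 / 4 : ℝ) = (1 / 2) ^ 2 by norm_num, Real.sqrt_sq (by norm_num)]
  simp only [piecePrimitive, hroot, hquarter]
  ring

lemma abs_add_mul_le_of_abs_le_one {a b e : ℝ} (he : |e| ≤ 1) : |a + e * b| ≤ |a| + |b| :=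
  (abs_add_le _ _).trans (by rw [abs_mul]; gcongr; exact mul_le_of_le_one_left (abs_nonneg b) he)

lemma abs_piecePrimitive_sub_le {e K x : ℝ} (he : |e| ≤ 1) (hv : |x - K| ≤ 1 / 2)
    (hx : 1 / 2 ≤ x) :
    |piecePrimitive e K (x ^ 2 - 1 / 4) - piecePrimitive e 0 0
        - (x ^ 2 - 1 / 4) / 2 * (1 / 6 - 2 * (x - K) ^ 2)| ≤ x := by
  rw [piecePrimitive_sub_eq e K (by linarith)]
  generalize x - K = v at hv ⊢
  obtain ⟨hv₁, hv₂⟩ := abs_le.1 hv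
  have hv2 : v ^ 2 ≤ 1 / 4 := by nlinarith
  have hv3 : |v ^ 3| ≤ 1 / 8 :=
    calc |v ^ 3| = |v| ^ 3 := abs_pow v 3
      _ ≤ (1 / 2) ^ 3 := by gcongr
      _ = 1 / 8 := by norm_num
  obtain ⟨hv3₁, hv3₂⟩ := abs_le.1 hv3
  have hA :
      |(3 / 64 - v ^ 2 / 8 - v ^ 4 / 4) + e * (1 / 24 - v / 24 + v ^ 3 / 6)| ≤ 1 / 4 := by
    refine (abs_add_mul_le_of_abs_le_one he).trans ?_
    have h₁ : |3 / 64 - v ^ 2 / 8 - v ^ 4 / 4| ≤ 3 / 64 :=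
      abs_le.2 ⟨by nlinarith, by nlinarith⟩
    have h₂ : |1 / 24 - v / 24 + v ^ 3 / 6| ≤ 1 / 12 := abs_le.2 ⟨by linarith, by linarith⟩
    linarith
  have hB : |(-v / 4 + v ^ 3) + e * (1 / 24 - v ^ 2 / 2)| ≤ 1 / 2 := by
    refine (abs_add_mul_le_of_abs_le_one he).trans ?_
    have h₁ : |-v / 4 + v ^ 3| ≤ 1 / 4 := abs_le.2 ⟨by linarith, by linarith⟩
    have h₂ : |1 / 24 - v ^ 2 / 2| ≤ 1 / 12 := abs_le.2 ⟨by nlinarith, by nlinarith⟩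
    linarith
  calc _ ≤ _ + |x * _| := abs_add_le _ _
    _ ≤ 1 / 4 + x * (1 / 2) := by
      rw [abs_mul, abs_of_nonneg (by linarith : (0 : ℝ) ≤ x)]
      gcongr
    _ ≤ x := by linarith

lemma abs_average_countingError_sub_le {e : ℝ} (he : |e| ≤ 1) {t : ℝ} (ht : 1 ≤ t) :
    |(1 / t) * (∫ s in (0 : ℝ)..t, countingError e s)
        - (1 / 2) * roundingCorrection √(t + 1 / 4)| ≤ 2 * t ^ (-(1 / 2) : ℝ) := by
  have ht₀ : 0 < t := by linarith
  have hk : 0 ≤ sphereIndex t := Int.floor_nonneg.2 (by positivity)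
  have hv := abs_sqrt_sub_sphereIndex_le t
  set x := √(t + 1 / 4) with hx
  set k := sphereIndex t
  have hxt : x ^ 2 - 1 / 4 = t := by rw [hx, Real.sq_sqrt (by linarith)]; ring
  have hx₁ : 1 ≤ x := by nlinarith [Real.sqrt_nonneg (t + 1 / 4)]
  have hmem : t ∈ Icc ((k : ℝ) ^ 2 - k) (k ^ 2 + k) := by
    obtain ⟨hv₁, hv₂⟩ := abs_le.1 hv
    constructor <;> nlinarith
  have hdefect := abs_piecePrimitive_sub_le he hv (by linarith)
  rw [hxt] at hdefect
  have hcorr : roundingCorrection x = 1 / 6 - 2 * (x - k) ^ 2 := rfl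
  have hx_le : x ≤ 2 * √t :=
    Real.sqrt_le_iff.2 ⟨by positivity, by rw [mul_pow, Real.sq_sqrt ht₀.le]; linarith⟩
  rw [(integral_countingError e hk hmem).2, hcorr]
  calc _ = |piecePrimitive e k t - piecePrimitive e 0 0
          - t / 2 * (1 / 6 - 2 * (x - k) ^ 2)| / t := by
        rw [← abs_of_pos ht₀, ← abs_div, abs_of_pos ht₀]
        congr 1
        field_simp
    _ ≤ 2 * √t / t := by gcongr; exact hdefect.trans hx_le
    _ = 2 * t ^ (-(1 / 2) : ℝ) := by
        rw [Real.rpow_neg ht₀.le, ← Real.sqrt_eq_rpow]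
        field_simp
        exact Real.sq_sqrt ht₀.le

/-- Average error asymptotics for the hemisphere with Neumann and Dirichlet boundary
conditions: both averages are `(1/2) g(√(t + 1/4)) + O(t^{-1/2})` where
`g(x) = 1/6 − 2(x − ⌊x + 1/2⌋)²`. -/
theorem hemisphere_average_error (g : ℝ → ℝ)
    (hg : ∀ x : ℝ, g x = 1 / 6 - 2 * (x - (⌊x + 1 / 2⌋ : ℝ)) ^ 2)
    (NN ND : ℝ → ℝ)
    (hNN : ∀ s : ℝ, 0 ≤ s → NN s =
      ((⌊Real.sqrt (s + 1 / 4) + 1 / 2⌋ : ℝ) ^ 2 + (⌊Real.sqrt (s + 1 / 4) + 1 / 2⌋ : ℝ)) / 2)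
    (hND : ∀ s : ℝ, 0 ≤ s → ND s =
      ((⌊Real.sqrt (s + 1 / 4) + 1 / 2⌋ : ℝ) ^ 2 - (⌊Real.sqrt (s + 1 / 4) + 1 / 2⌋ : ℝ)) / 2) :
    ∃ C : ℝ, ∀ t : ℝ, 1 ≤ t →
      |(1 / t) * (∫ s in (0:ℝ)..t,
          (NN s - (s / 2 + (1 / 2) * Real.sqrt (s + 1 / 4) + 1 / 6)))
        - (1 / 2) * g (Real.sqrt (t + 1 / 4))| ≤ C * t ^ (-(1/2) : ℝ) ∧
      |(1 / t) * (∫ s in (0:ℝ)..t,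
          (ND s - (s / 2 - (1 / 2) * Real.sqrt (s + 1 / 4) + 1 / 6)))
        - (1 / 2) * g (Real.sqrt (t + 1 / 4))| ≤ C * t ^ (-(1/2) : ℝ) := by
  have hg' : g = roundingCorrection := funext hg
  refine ⟨2, fun t ht => ?_⟩
  have hs₀ : ∀ s ∈ uIcc 0 t, 0 ≤ s := fun s hs => by
    rw [uIcc_of_le (by linarith)] at hs
    exact hs.1
  rw [hg']
  constructor
  · rw [intervalIntegral.integral_congr (g := countingError 1) fun s hs => ?_]
    · exact abs_average_countingError_sub_le (by norm_num) ht
    rw [hNN s (hs₀ s hs), countingError, pieceError, sphereIndex]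
    ring
  · rw [intervalIntegral.integral_congr (g := countingError (-1)) fun s hs => ?_]
    · exact abs_average_countingError_sub_le (by norm_num) ht
    rw [hND s (hs₀ s hs), countingError, pieceError, sphereIndex]
    ring
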